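/- arXiv:2403.18564 — 2 statements merged into one kernel-verified Lean document; each statement's English description precedes it below -/
import Mathlib

section
/- Minkowski XOR of constrained polynomial logical zonotopes: { x1 ⊕ x2 | x1 ∈ C1, x2 ∈ C2 } is exactly the constrained polynomial logical zonotope with center c1 ⊕ c2, generator matrix [G1, G2], block-diagonal exponent matrix diag(E1, E2) over p1 + p2 fresh parameters, block-diagonal constraint matrix diag(A1, A2), constraint vector [b1; b2], and block-diagonal constraint exponent matrix diag(R1, R2). -/
/-- Constrained polynomial logical zonotope over 𝔹 = ZMod 2, with generators
indexed by `ι`, parameters indexed by `π`, constraint columns `κ` and constraint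
rows `μ`. -/
def CPLZ {n : ℕ} {ι π κ μ : Type*} [Fintype ι] [Fintype π] [Fintype κ]
    (c : Fin n → ZMod 2) (g : ι → Fin n → ZMod 2) (E : π → ι → ZMod 2)
    (A : κ → μ → ZMod 2) (b : μ → ZMod 2) (R : π → κ → ZMod 2) :
    Set (Fin n → ZMod 2) :=
  { x | ∃ α : π → ZMod 2,
      x = c + ∑ i, (∏ k, α k ^ (E k i).val) • g i ∧
      ∑ j, (∏ k, α k ^ (R k j).val) • A j = b }

/-- Minkowski XOR of constrained polynomial logical zonotopes is exactly the
constrained polynomial logical zonotope with center `c1 ⊕ c2`, concatenated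
generators `[G1, G2]`, block-diagonal `E`, `A`, `R` and stacked `b` over the
disjoint union of the parameters. -/
theorem CPLZ_minkXor {n : ℕ} {ι1 ι2 π1 π2 κ1 κ2 μ1 μ2 : Type*}
    [Fintype ι1] [Fintype ι2] [Fintype π1] [Fintype π2] [Fintype κ1] [Fintype κ2]
    (c1 c2 : Fin n → ZMod 2)
    (g1 : ι1 → Fin n → ZMod 2) (g2 : ι2 → Fin n → ZMod 2)
    (E1 : π1 → ι1 → ZMod 2) (E2 : π2 → ι2 → ZMod 2)
    (A1 : κ1 → μ1 → ZMod 2) (A2 : κ2 → μ2 → ZMod 2)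
    (b1 : μ1 → ZMod 2) (b2 : μ2 → ZMod 2)
    (R1 : π1 → κ1 → ZMod 2) (R2 : π2 → κ2 → ZMod 2) :
    { z | ∃ x1 ∈ CPLZ c1 g1 E1 A1 b1 R1, ∃ x2 ∈ CPLZ c2 g2 E2 A2 b2 R2,
        z = x1 + x2 } =
      CPLZ (c1 + c2) (Sum.elim g1 g2)
        (Sum.elim (fun k => Sum.elim (E1 k) 0) (fun k => Sum.elim 0 (E2 k)))
        (Sum.elim (fun j => Sum.elim (A1 j) 0) (fun j => Sum.elim 0 (A2 j)))
        (Sum.elim b1 b2)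
        (Sum.elim (fun k => Sum.elim (R1 k) 0) (fun k => Sum.elim 0 (R2 k))) := by
  ext z
  simp only [CPLZ, Set.mem_setOf_eq]
  constructor
  · rintro ⟨x1, ⟨α1, rfl, h1⟩, x2, ⟨α2, rfl, h2⟩, rfl⟩
    refine ⟨Sum.elim α1 α2, ?_, ?_⟩
    · simp only [Fintype.sum_sum_type, Fintype.prod_sum_type, Sum.elim_inl,
        Sum.elim_inr, Pi.zero_apply, ZMod.val_zero, pow_zero, Finset.prod_const_one,
        mul_one, one_mul]
      abel
    · funext m
      have h1' := congrFun h1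
      have h2' := congrFun h2
      cases m with
      | inl m =>
        have := h1' m
        simp only [Fintype.sum_sum_type, Fintype.prod_sum_type, Sum.elim_inl,
          Sum.elim_inr, Pi.zero_apply, ZMod.val_zero, pow_zero,
          Finset.prod_const_one, mul_one, one_mul, Finset.sum_apply,
          Pi.smul_apply, smul_eq_mul, mul_zero, Finset.sum_const_zero,
          add_zero] at this ⊢
        simpa using this
      | inr m =>
        have := h2' m
        simp only [Fintype.sum_sum_type, Fintype.prod_sum_type, Sum.elim_inl,
          Sum.elim_inr, Pi.zero_apply, ZMod.val_zero, pow_zero,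
          Finset.prod_const_one, mul_one, one_mul, Finset.sum_apply,
          Pi.smul_apply, smul_eq_mul, mul_zero, Finset.sum_const_zero,
          zero_add] at this ⊢
        simpa using this
  · rintro ⟨α, rfl, h⟩
    have h' := congrFun h
    refine ⟨_, ⟨α ∘ Sum.inl, rfl, ?_⟩, _, ⟨α ∘ Sum.inr, rfl, ?_⟩, ?_⟩
    · funext m
      have := h' (Sum.inl m)
      simp only [Fintype.sum_sum_type, Fintype.prod_sum_type, Sum.elim_inl,
        Sum.elim_inr, Pi.zero_apply, ZMod.val_zero, pow_zero,
        Finset.prod_const_one, mul_one, one_mul, Finset.sum_apply,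
        Pi.smul_apply, smul_eq_mul, mul_zero, Finset.sum_const_zero,
        add_zero, Function.comp] at this ⊢
      simpa using this
    · funext m
      have := h' (Sum.inr m)
      simp only [Fintype.sum_sum_type, Fintype.prod_sum_type, Sum.elim_inl,
        Sum.elim_inr, Pi.zero_apply, ZMod.val_zero, pow_zero,
        Finset.prod_const_one, mul_one, one_mul, Finset.sum_apply,
        Pi.smul_apply, smul_eq_mul, mul_zero, Finset.sum_const_zero,
        zero_add, Function.comp] at this ⊢
      simpa using this
    · simp only [Fintype.sum_sum_type, Fintype.prod_sum_type, Sum.elim_inl,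
        Sum.elim_inr, Pi.zero_apply, ZMod.val_zero, pow_zero,
        Finset.prod_const_one, mul_one, one_mul, Function.comp]
      abel
end

section
/- Minkowski AND of constrained polynomial logical zonotopes is exact: { x1 ∧ x2 | x1 ∈ C1, x2 ∈ C2 } equals the constrained polynomial logical zonotope with center c1 ∧ c2, generators c1 ∧ g_{2,j}, c2 ∧ g_{1,i}, g_{1,i} ∧ g_{2,j}, corresponding exponent columns [0; E2(·,j)], [E1(·,i); 0], [E1(·,i); E2(·,j)] over the disjoint union of parameters, and constraints diag(A1, A2), [b1; b2], diag(R1, R2). -/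
theorem aux_prod {n : ℕ} {ι1 ι2 : Type*} [Fintype ι1] [Fintype ι2]
    (c1 c2 : Fin n → ZMod 2) (g1 : ι1 → Fin n → ZMod 2) (g2 : ι2 → Fin n → ZMod 2)
    (P1 : ι1 → ZMod 2) (P2 : ι2 → ZMod 2) :
    (c1 + ∑ i, P1 i • g1 i) * (c2 + ∑ j, P2 j • g2 j) =
      c1 * c2 + (∑ j, P2 j • (c1 * g2 j) + (∑ i, P1 i • (c2 * g1 i)
        + ∑ i, ∑ j, (P1 i * P2 j) • (g1 i * g2 j))) := by
  rw [add_mul, mul_add, mul_add, Finset.sum_mul_sum, Finset.mul_sum, Finset.sum_mul]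
  simp only [mul_smul_comm, smul_mul_assoc, smul_smul]
  rw [add_assoc]
  congr 2
  congr 1
  · exact Finset.sum_congr rfl fun i _ => by rw [mul_comm (g1 i) c2]
  · exact Finset.sum_congr rfl fun i _ => Finset.sum_congr rfl fun j _ => by
      rw [mul_comm (P2 j) (P1 i)]

/-- Minkowski AND of constrained polynomial logical zonotopes is exact:
`{ x1 ∧ x2 | x1 ∈ C1, x2 ∈ C2 }` equals the constrained polynomial logical
zonotope with center `c1 ∧ c2`, generators `c1 ∧ g_{2,j}`, `c2 ∧ g_{1,i}`,
`g_{1,i} ∧ g_{2,j}`, exponent columns `[0; E2(·,j)]`, `[E1(·,i); 0]`,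
`[E1(·,i); E2(·,j)]` over the disjoint union of the parameters, and
block-diagonal constraints. -/
theorem CPLZ_minkAnd {n : ℕ} {ι1 ι2 π1 π2 κ1 κ2 μ1 μ2 : Type*}
    [Fintype ι1] [Fintype ι2] [Fintype π1] [Fintype π2] [Fintype κ1] [Fintype κ2]
    (c1 c2 : Fin n → ZMod 2)
    (g1 : ι1 → Fin n → ZMod 2) (g2 : ι2 → Fin n → ZMod 2)
    (E1 : π1 → ι1 → ZMod 2) (E2 : π2 → ι2 → ZMod 2)
    (A1 : κ1 → μ1 → ZMod 2) (A2 : κ2 → μ2 → ZMod 2)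
    (b1 : μ1 → ZMod 2) (b2 : μ2 → ZMod 2)
    (R1 : π1 → κ1 → ZMod 2) (R2 : π2 → κ2 → ZMod 2) :
    { z | ∃ x1 ∈ CPLZ c1 g1 E1 A1 b1 R1, ∃ x2 ∈ CPLZ c2 g2 E2 A2 b2 R2,
        z = x1 * x2 } =
      CPLZ (c1 * c2)
        (Sum.elim (fun j => c1 * g2 j)
          (Sum.elim (fun i => c2 * g1 i)
            (fun p : ι1 × ι2 => g1 p.1 * g2 p.2)))
        (fun k =>
          Sum.elim (fun j => Sum.elim (fun _ => (0 : ZMod 2)) (fun k2 => E2 k2 j) k)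
            (Sum.elim (fun i => Sum.elim (fun k1 => E1 k1 i) (fun _ => (0 : ZMod 2)) k)
              (fun p : ι1 × ι2 =>
                Sum.elim (fun k1 => E1 k1 p.1) (fun k2 => E2 k2 p.2) k)))
        (Sum.elim (fun j => Sum.elim (A1 j) 0) (fun j => Sum.elim 0 (A2 j)))
        (Sum.elim b1 b2)
        (Sum.elim (fun k => Sum.elim (R1 k) 0) (fun k => Sum.elim 0 (R2 k))) := by
  set Ebig : (π1 ⊕ π2) → (ι2 ⊕ (ι1 ⊕ ι1 × ι2)) → ZMod 2 := fun k =>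
    Sum.elim (fun j => Sum.elim (fun _ => (0 : ZMod 2)) (fun k2 => E2 k2 j) k)
      (Sum.elim (fun i => Sum.elim (fun k1 => E1 k1 i) (fun _ => (0 : ZMod 2)) k)
        (fun p : ι1 × ι2 =>
          Sum.elim (fun k1 => E1 k1 p.1) (fun k2 => E2 k2 p.2) k)) with hE
  set Gbig : (ι2 ⊕ (ι1 ⊕ ι1 × ι2)) → Fin n → ZMod 2 :=
    Sum.elim (fun j => c1 * g2 j)
      (Sum.elim (fun i => c2 * g1 i) (fun p : ι1 × ι2 => g1 p.1 * g2 p.2)) with hG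
  set Abig : (κ1 ⊕ κ2) → (μ1 ⊕ μ2) → ZMod 2 :=
    Sum.elim (fun j => Sum.elim (A1 j) 0) (fun j => Sum.elim 0 (A2 j)) with hA
  set Rbig : (π1 ⊕ π2) → (κ1 ⊕ κ2) → ZMod 2 :=
    Sum.elim (fun k => Sum.elim (R1 k) 0) (fun k => Sum.elim 0 (R2 k)) with hR
  have main_sum : ∀ α : π1 ⊕ π2 → ZMod 2,
      c1 * c2 + ∑ i, (∏ k, α k ^ (Ebig k i).val) • Gbig i =
      (c1 + ∑ i, (∏ k, α (Sum.inl k) ^ (E1 k i).val) • g1 i) *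
      (c2 + ∑ j, (∏ k, α (Sum.inr k) ^ (E2 k j).val) • g2 j) := by
    intro α
    rw [aux_prod]
    simp [hE, hG, Fintype.sum_sum_type, Fintype.sum_prod_type, Fintype.prod_sum_type]
  have main_con : ∀ α : π1 ⊕ π2 → ZMod 2,
      ∑ j, (∏ k, α k ^ (Rbig k j).val) • Abig j =
      Sum.elim (∑ j, (∏ k, α (Sum.inl k) ^ (R1 k j).val) • A1 j)
        (∑ j, (∏ k, α (Sum.inr k) ^ (R2 k j).val) • A2 j) := by
    intro α
    funext m
    cases m with
    | inl m =>
      simp [hA, hR, Fintype.sum_sum_type, Fintype.prod_sum_type, Finset.sum_apply]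
    | inr m =>
      simp [hA, hR, Fintype.sum_sum_type, Fintype.prod_sum_type, Finset.sum_apply]
  ext z
  simp only [CPLZ, Set.mem_setOf_eq]
  constructor
  · rintro ⟨x1, ⟨α1, hx1, hA1⟩, x2, ⟨α2, hx2, hA2⟩, rfl⟩
    refine ⟨Sum.elim α1 α2, ?_, ?_⟩
    · rw [main_sum]
      simp only [Sum.elim_inl, Sum.elim_inr]
      rw [← hx1, ← hx2]
    · rw [main_con]
      simp only [Sum.elim_inl, Sum.elim_inr]
      rw [hA1, hA2]
  · rintro ⟨α, hx, hAc⟩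
    rw [main_sum] at hx
    rw [main_con] at hAc
    refine ⟨_, ⟨fun k => α (Sum.inl k), rfl, ?_⟩, _, ⟨fun k => α (Sum.inr k), rfl, ?_⟩, hx⟩
    · funext m; exact congrFun hAc (Sum.inl m)
    · funext m; exact congrFun hAc (Sum.inr m)
end
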